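/- Let M1 < M2 be coprime positive integers, let D_cp = {m M2 : 0 ≤ m ≤ 2M1−1} ∪ {m M1 : 1 ≤ m ≤ M2−1} be the co-prime array position set, and let n be an integer with 1 ≤ n ≤ M2−1. Then at the grating-lobe point Δ = 2n/M2, the array sum is exactly Σ_{d∈D_cp} exp(iπ d Δ) = 2M1 − 1; consequently the side lobe height is G(Δ; D_cp) = (2M1−1)²/M² where M = 2M1 + M2 − 1. -/

import Mathlib

open Finset

/-! With `ζ = exp (2πi / M2)`, the term of position `d` is `ζ ^ (d * n)`. The `2 * M1` positions
`m * M2` each contribute `1`. The positions `k * M1`, `1 ≤ k < M2`, give the geometric sum of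
`ζ ^ (M1 * n)` without its `k = 0` term, which is `-1` because coprimality and `0 < n < M2`
make `ζ ^ (M1 * n) ≠ 1` an `M2`-th root of unity. Coprimality also keeps the two subarrays
disjoint. -/

def Dcp (M1 M2 : ℕ) : Finset ℕ :=
  (Finset.range (2 * M1)).image (fun m => m * M2) ∪
    (Finset.Icc 1 (M2 - 1)).image (fun m => m * M1)

theorem geom_sum_eq_zero_of_pow_eq_one {R : Type*} [CommRing R] [IsDomain R] {x : R} {N : ℕ}
    (hxN : x ^ N = 1) (hx : x ≠ 1) : ∑ i ∈ range N, x ^ i = 0 :=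
  eq_zero_of_ne_zero_of_mul_left_eq_zero (sub_ne_zero_of_ne hx.symm) <| by
    rw [mul_neg_geom_sum, hxN, sub_self]

theorem disjoint_image_mul_Icc_image_mul {M1 M2 : ℕ} (hc : M1.Coprime M2) (s : Finset ℕ) :
    Disjoint (s.image (· * M2)) ((Icc 1 (M2 - 1)).image (· * M1)) := by
  simp only [disjoint_left, mem_image, mem_Icc, not_exists, not_and]
  rintro _ ⟨m, -, rfl⟩ k ⟨hk1, hkM2⟩ hkm
  have hM2k : M2 ∣ k := hc.symm.dvd_of_dvd_mul_right ⟨m, by rw [hkm, mul_comm]⟩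
  have := Nat.le_of_dvd hk1 hM2k
  omega

theorem sum_Dcp {M : Type*} [AddCommMonoid M] (f : ℕ → M) {M1 M2 : ℕ} (h1 : 0 < M1)
    (h2 : 0 < M2) (hc : M1.Coprime M2) :
    ∑ d ∈ Dcp M1 M2, f d =
      ∑ m ∈ range (2 * M1), f (m * M2) + ∑ k ∈ Icc 1 (M2 - 1), f (k * M1) := by
  rw [Dcp, sum_union (disjoint_image_mul_Icc_image_mul hc _),
    sum_image fun _ _ _ _ => (Nat.mul_left_inj h2.ne').1,
    sum_image fun _ _ _ _ => (Nat.mul_left_inj h1.ne').1]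

namespace IsPrimitiveRoot

variable {R : Type*} [CommRing R] [IsDomain R] {ζ : R} {N : ℕ}

theorem sum_Icc_pow_mul_eq_neg_one (hζ : IsPrimitiveRoot ζ N) (hN : 0 < N) {a : ℕ}
    (ha : ¬ N ∣ a) : ∑ k ∈ Icc 1 (N - 1), ζ ^ (k * a) = -1 := by
  have hgeom : ∑ k ∈ range N, (ζ ^ a) ^ k = 0 := by
    refine geom_sum_eq_zero_of_pow_eq_one ?_ ?_
    · rw [← pow_mul, mul_comm, pow_mul, hζ.pow_eq_one, one_pow]
    · rwa [Ne, hζ.pow_eq_one_iff_dvd]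
  have hrange : range N = insert 0 (Icc 1 (N - 1)) := by
    ext k
    simp only [mem_range, mem_insert, mem_Icc]
    omega
  rw [hrange, sum_insert (by simp), pow_zero] at hgeom
  simp_rw [mul_comm _ a, pow_mul]
  linear_combination hgeom

theorem sum_Dcp_pow_mul_eq {M1 M2 n : ℕ} (hζ : IsPrimitiveRoot ζ M2) (h0 : 0 < M1)
    (hc : M1.Coprime M2) (hn1 : 1 ≤ n) (hn2 : n ≤ M2 - 1) :
    ∑ d ∈ Dcp M1 M2, ζ ^ (d * n) = 2 * M1 - 1 := by
  have hM2 : 0 < M2 := by omega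
  have hsub1 : ∑ m ∈ range (2 * M1), ζ ^ (m * M2 * n) = 2 * M1 := by
    simp_rw [mul_right_comm _ M2, mul_comm _ M2, pow_mul, hζ.pow_eq_one, one_pow, sum_const,
      card_range, nsmul_eq_mul, mul_one]
    push_cast
    ring
  have hsub2 : ∑ k ∈ Icc 1 (M2 - 1), ζ ^ (k * M1 * n) = -1 := by
    simp_rw [mul_assoc]
    refine hζ.sum_Icc_pow_mul_eq_neg_one hM2 fun hdvd => ?_
    have := Nat.le_of_dvd hn1 (hc.symm.dvd_of_dvd_mul_left hdvd)
    omega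
  rw [sum_Dcp (fun d => ζ ^ (d * n)) h0 hM2 hc, hsub1, hsub2]
  ring

end IsPrimitiveRoot

theorem Complex.exp_grating_lobe_eq_pow (M2 n d : ℕ) :
    Complex.exp (Complex.I * Real.pi * (d : ℝ) * (2 * (n : ℝ) / (M2 : ℝ))) =
      Complex.exp (2 * Real.pi * Complex.I / M2) ^ (d * n) := by
  rw [← Complex.exp_nat_mul]
  push_cast
  ring_nf

theorem coprime_grating_lobe_subarray1_general (M1 M2 : ℕ) (h0 : 0 < M1)
    (hc : Nat.Coprime M1 M2) (n : ℕ) (hn1 : 1 ≤ n) (hn2 : n ≤ M2 - 1) :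
    (∑ d ∈ Dcp M1 M2,
        Complex.exp (Complex.I * Real.pi * (d : ℝ) * (2 * (n : ℝ) / (M2 : ℝ)))) =
      (2 * (M1 : ℂ) - 1) ∧
    (1 / (2 * (M1 : ℝ) + (M2 : ℝ) - 1) ^ 2) *
        (‖∑ d ∈ Dcp M1 M2,
          Complex.exp (Complex.I * Real.pi * (d : ℝ) * (2 * (n : ℝ) / (M2 : ℝ)))‖) ^ 2 =
      (2 * (M1 : ℝ) - 1) ^ 2 / (2 * (M1 : ℝ) + (M2 : ℝ) - 1) ^ 2 := by
  have hζ := Complex.isPrimitiveRoot_exp M2 (by omega)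
  have hsum : ∑ d ∈ Dcp M1 M2,
      Complex.exp (Complex.I * Real.pi * (d : ℝ) * (2 * (n : ℝ) / (M2 : ℝ))) = 2 * M1 - 1 := by
    simp_rw [Complex.exp_grating_lobe_eq_pow]
    exact hζ.sum_Dcp_pow_mul_eq h0 hc hn1 hn2
  have hnorm : ‖(2 * M1 - 1 : ℂ)‖ = 2 * M1 - 1 := by
    have : (1 : ℝ) ≤ M1 := by exact_mod_cast h0
    rw [show (2 * M1 - 1 : ℂ) = ((2 * M1 - 1 : ℝ) : ℂ) by push_cast; ring, Complex.norm_real,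
      Real.norm_of_nonneg (by linarith)]
  refine ⟨hsum, ?_⟩
  rw [hsum, hnorm, one_div_mul_eq_div]

/-- at the grating-lobe point `Δ = 2n/M2` with `1 ≤ n ≤ M2−1`, the
co-prime array sum equals `2M1 − 1`; hence the side lobe height is
`(2M1−1)²/M²` with `M = 2M1 + M2 − 1`. -/
theorem coprime_grating_lobe_subarray1 (M1 M2 : ℕ) (h0 : 0 < M1) (h12 : M1 < M2)
    (hc : Nat.Coprime M1 M2) (n : ℕ) (hn1 : 1 ≤ n) (hn2 : n ≤ M2 - 1) :
    (∑ d ∈ Dcp M1 M2,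
        Complex.exp (Complex.I * Real.pi * (d : ℝ) * (2 * (n : ℝ) / (M2 : ℝ)))) =
      (2 * (M1 : ℂ) - 1) ∧
    (1 / (2 * (M1 : ℝ) + (M2 : ℝ) - 1) ^ 2) *
        (‖∑ d ∈ Dcp M1 M2,
          Complex.exp (Complex.I * Real.pi * (d : ℝ) * (2 * (n : ℝ) / (M2 : ℝ)))‖) ^ 2 =
      (2 * (M1 : ℝ) - 1) ^ 2 / (2 * (M1 : ℝ) + (M2 : ℝ) - 1) ^ 2 :=
  coprime_grating_lobe_subarray1_general M1 M2 h0 hc n hn1 hn2
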